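/- Let (Ω, ‖·‖₁) be the Banach space of families U(m,n) of bounded operators on a Banach space X (m ≥ n) with ‖U‖₁ = sup_{m ≥ n} ‖U(m,n)‖ (h_m/h_n)^{-a} μ_{|n|}^{-ε} < ∞. Under hypotheses (a₁), (a₂), (a₄) of the roughness theorem (nonuniform (h,k,μ,ν)-dichotomy for A_m with constants K, a, b, ε; perturbation bound ‖B_m(λ)‖ ≤ c·min{(h_{m+1}/h_m)^a μ_{|m+1|}^{-ω-ε}, ν_{|m+1|}^{-ω-ε}}; series bounds ∑_{τ<m} μ_{|τ+1|}^{-ω} ν_{|m|}^ε ≤ N₁ and ∑_{τ≥m} μ_{|m|}^ε ν_{|τ+1|}^{-ω} ≤ N₂), the operator J defined by (J U)(m,n) = 𝒜(m,n)P_n + ∑_{τ=n}^{m-1} 𝒜(m,τ+1)P_{τ+1}B_τ(λ)U(τ,n) − ∑_{τ=m}^{∞} 𝒜(m,τ+1)Q_{τ+1}B_τ(λ)U(τ,n) maps Ω into Ω and satisfies ‖J U₁ − J U₂‖₁ ≤ K c (N₁+N₂) ‖U₁ − U₂‖₁. In particular, if K c (N₁+N₂) < 1, J has a unique fixed point in Ω.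 -/

import Mathlib

open Filter

/-- A growth rate on `ℤ`. -/
def IsGrowthRate (u : ℤ → ℝ) : Prop :=
  StrictMono u ∧ u 0 = 1 ∧ Tendsto u atTop atTop ∧ Tendsto u atBot (nhds 0)

/-- The weighted quantities whose supremum defines the norm `‖·‖₁`. -/
def weightSet {X : Type*} [NormedAddCommGroup X] [NormedSpace ℝ X]
    (h μ : ℤ → ℝ) (a ε : ℝ) (U : ℤ → ℤ → X →L[ℝ] X) : Set ℝ :=
  (fun p : ℤ × ℤ => ‖U p.1 p.2‖ * (h p.1 / h p.2) ^ (-a) * μ |p.2| ^ (-ε)) '' {p | p.2 ≤ p.1}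

/-- Membership in the Banach space `Ω`: the weighted norm is finite. -/
def InOmega {X : Type*} [NormedAddCommGroup X] [NormedSpace ℝ X]
    (h μ : ℤ → ℝ) (a ε : ℝ) (U : ℤ → ℤ → X →L[ℝ] X) : Prop :=
  BddAbove (weightSet h μ a ε U)

/-- The norm `‖U‖₁ = sup_{m ≥ n} ‖U(m,n)‖ (h m / h n)^{-a} μ_{|n|}^{-ε}`. -/
noncomputable def norm1 {X : Type*} [NormedAddCommGroup X] [NormedSpace ℝ X]
    (h μ : ℤ → ℝ) (a ε : ℝ) (U : ℤ → ℤ → X →L[ℝ] X) : ℝ :=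
  sSup (weightSet h μ a ε U)

/-- The fixed point operator `J`. -/
noncomputable def Jop {X : Type*} [NormedAddCommGroup X] [NormedSpace ℝ X]
    [CompleteSpace X]
    (𝓐 : ℤ → ℤ → X →L[ℝ] X) (P B : ℤ → X →L[ℝ] X)
    (U : ℤ → ℤ → X →L[ℝ] X) (m n : ℤ) : X →L[ℝ] X :=
  (𝓐 m n).comp (P n)
    + ∑ τ ∈ Finset.Ico n m, (𝓐 m (τ + 1)).comp ((P (τ + 1)).comp ((B τ).comp (U τ n)))
    - ∑' τ : ℕ, (𝓐 m (m + τ + 1)).comp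
        (((ContinuousLinearMap.id ℝ X - P (m + τ + 1))).comp
          ((B (m + τ)).comp (U (m + τ) n)))


/-!
Write `w(m,n) = (h_m/h_n)^a μ_{|n|}^ε`, so that `U ∈ Ω` means `‖U(m,n)‖ ≤ C w(m,n)` for `n ≤ m`.
If `‖V(τ,n)‖ ≤ M w(τ,n)`, the dichotomy estimates, the bound on `B` and the cocycle identity
`(h_m/h_{τ+1})^a (h_{τ+1}/h_τ)^a (h_τ/h_n)^a = (h_m/h_n)^a` bound each stable summand of `J`
by `K c M μ_{|τ+1|}^{-ω} w(m,n)`, and each unstable one by `K c M ν_{|τ+1|}^{-ω} w(m,n)`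
(using `w(τ,n) ≤ w(m,n)` for `τ ≥ m`, as `a < 0`). Since `μ^ε, ν^ε ≥ 1`, the sums of these
factors are at most `N₁` and `N₂`, which makes `J` Lipschitz for `‖·‖₁` with constant
`K c (N₁ + N₂)`. Dividing by `w` identifies `Ω` with a space of bounded functions, where the
contraction principle gives the fixed point.
-/

open Finset BoundedContinuousFunction

lemma IsGrowthRate.pos {u : ℤ → ℝ} (hu : IsGrowthRate u) (n : ℤ) : 0 < u n := by
  have h0 : 0 ≤ u (n - 1) := by
    refine le_of_tendsto hu.2.2.2 ?_
    filter_upwards [eventually_le_atBot (n - 1)] with j hj using hu.1.monotone hj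
  linarith [hu.1 (show n - 1 < n by omega)]

lemma IsGrowthRate.one_le_apply_abs {u : ℤ → ℝ} (hu : IsGrowthRate u) (n : ℤ) : 1 ≤ u |n| :=
  hu.2.1 ▸ hu.1.monotone (abs_nonneg n)

lemma rpow_mul_rpow_neg_add {x : ℝ} (hx : 0 < x) (ω ε : ℝ) :
    x ^ ε * x ^ (-(ω + ε)) = x ^ (-ω) := by
  rw [← Real.rpow_add hx]
  ring_nf

lemma div_rpow_mul_div_rpow {x y z : ℝ} (hx : 0 ≤ x) (hy : 0 < y) (hz : 0 < z) (a : ℝ) :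
    (x / y) ^ a * (y / z) ^ a = (x / z) ^ a := by
  rw [← Real.mul_rpow (by positivity) (by positivity), div_mul_div_cancel₀ hy.ne']

/-- `‖U‖₁ = sup_{n ≤ m} ‖U m n‖ / dichotomyWeight h μ a ε m n`. -/
noncomputable def dichotomyWeight (h μ : ℤ → ℝ) (a ε : ℝ) (m n : ℤ) : ℝ :=
  (h m / h n) ^ a * μ |n| ^ ε

section Weight

variable {h μ : ℤ → ℝ} {a ε : ℝ}

lemma dichotomyWeight_pos (hh : IsGrowthRate h) (hμ : IsGrowthRate μ) (m n : ℤ) :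
    0 < dichotomyWeight h μ a ε m n :=
  mul_pos (Real.rpow_pos_of_pos (div_pos (hh.pos m) (hh.pos n)) a)
    (Real.rpow_pos_of_pos (hμ.pos |n|) ε)

lemma dichotomyWeight_inv (hh : IsGrowthRate h) (hμ : IsGrowthRate μ) (m n : ℤ) :
    (dichotomyWeight h μ a ε m n)⁻¹ = (h m / h n) ^ (-a) * μ |n| ^ (-ε) := by
  rw [dichotomyWeight, mul_inv, Real.rpow_neg (div_pos (hh.pos m) (hh.pos n)).le,
    Real.rpow_neg (hμ.pos |n|).le]

lemma dichotomyWeight_le_of_le (hh : IsGrowthRate h) (hμ : IsGrowthRate μ) (ha : a ≤ 0)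
    {m τ : ℤ} (hmτ : m ≤ τ) (n : ℤ) :
    dichotomyWeight h μ a ε τ n ≤ dichotomyWeight h μ a ε m n := by
  have hn := hh.pos n
  refine mul_le_mul_of_nonneg_right ?_ (Real.rpow_nonneg (hμ.pos _).le ε)
  exact Real.rpow_le_rpow_of_nonpos (div_pos (hh.pos m) hn)
    (div_le_div_of_nonneg_right (hh.1.monotone hmτ) hn.le) ha

lemma nonneg_of_norm_le_mul_dichotomyWeight {E : Type*} [SeminormedAddCommGroup E]
    (hh : IsGrowthRate h) (hμ : IsGrowthRate μ) {x : E} {M : ℝ} {m n : ℤ}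
    (hx : ‖x‖ ≤ M * dichotomyWeight h μ a ε m n) : 0 ≤ M :=
  nonneg_of_mul_nonneg_left ((norm_nonneg x).trans hx) (dichotomyWeight_pos hh hμ m n)

end Weight

section Omega

variable {X : Type*} [NormedAddCommGroup X] [NormedSpace ℝ X] {h μ : ℤ → ℝ} {a ε : ℝ}

lemma weightSet_eq (hh : IsGrowthRate h) (hμ : IsGrowthRate μ) (U : ℤ → ℤ → X →L[ℝ] X) :
    weightSet h μ a ε U =
      (fun p : ℤ × ℤ => ‖U p.1 p.2‖ / dichotomyWeight h μ a ε p.1 p.2) '' {p | p.2 ≤ p.1} := by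
  simp only [weightSet, div_eq_mul_inv, dichotomyWeight_inv hh hμ, mul_assoc]

lemma weightSet_congr {U V : ℤ → ℤ → X →L[ℝ] X} (hUV : ∀ m n, n ≤ m → U m n = V m n) :
    weightSet h μ a ε U = weightSet h μ a ε V :=
  Set.image_congr fun p hp => by rw [hUV p.1 p.2 hp]

lemma inOmega_iff (hh : IsGrowthRate h) (hμ : IsGrowthRate μ) {U : ℤ → ℤ → X →L[ℝ] X} :
    InOmega h μ a ε U ↔ ∃ C, ∀ m n, n ≤ m → ‖U m n‖ ≤ C * dichotomyWeight h μ a ε m n := by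
  simp only [InOmega, weightSet_eq hh hμ, bddAbove_def, Set.forall_mem_image, Prod.forall,
    Set.mem_ofPred_eq, div_le_iff₀ (dichotomyWeight_pos hh hμ _ _)]

lemma InOmega.sub (hh : IsGrowthRate h) (hμ : IsGrowthRate μ) {U V : ℤ → ℤ → X →L[ℝ] X}
    (hU : InOmega h μ a ε U) (hV : InOmega h μ a ε V) :
    InOmega h μ a ε (fun m n => U m n - V m n) := by
  obtain ⟨C, hC⟩ := (inOmega_iff hh hμ).1 hU
  obtain ⟨D, hD⟩ := (inOmega_iff hh hμ).1 hV
  refine (inOmega_iff hh hμ).2 ⟨C + D, fun m n hnm => ?_⟩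
  rw [add_mul]
  exact (norm_sub_le _ _).trans (add_le_add (hC m n hnm) (hD m n hnm))

lemma norm_le_norm1_mul (hh : IsGrowthRate h) (hμ : IsGrowthRate μ)
    {U : ℤ → ℤ → X →L[ℝ] X} (hU : InOmega h μ a ε U) {m n : ℤ} (hnm : n ≤ m) :
    ‖U m n‖ ≤ norm1 h μ a ε U * dichotomyWeight h μ a ε m n := by
  have hmem : ‖U m n‖ / dichotomyWeight h μ a ε m n ∈ weightSet h μ a ε U := by
    rw [weightSet_eq hh hμ]
    exact ⟨(m, n), hnm, rfl⟩
  exact (div_le_iff₀ (dichotomyWeight_pos hh hμ m n)).1 (le_csSup hU hmem)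

lemma norm1_le (hh : IsGrowthRate h) (hμ : IsGrowthRate μ) {U : ℤ → ℤ → X →L[ℝ] X} {C : ℝ}
    (hC : ∀ m n, n ≤ m → ‖U m n‖ ≤ C * dichotomyWeight h μ a ε m n) :
    norm1 h μ a ε U ≤ C := by
  rw [norm1, weightSet_eq hh hμ]
  refine csSup_le ⟨_, (0, 0), le_refl (0 : ℤ), rfl⟩ ?_
  rintro _ ⟨p, hp, rfl⟩
  exact (div_le_iff₀ (dichotomyWeight_pos hh hμ _ _)).2 (hC p.1 p.2 hp)

lemma norm1_nonneg (hh : IsGrowthRate h) (hμ : IsGrowthRate μ) (U : ℤ → ℤ → X →L[ℝ] X) :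
    0 ≤ norm1 h μ a ε U := by
  rw [norm1, weightSet_eq hh hμ]
  refine Real.sSup_nonneg ?_
  rintro _ ⟨p, -, rfl⟩
  exact div_nonneg (norm_nonneg _) (dichotomyWeight_pos hh hμ _ _).le

end Omega

theorem exists_fixedPoint_of_weighted_contraction {α E : Type*} [TopologicalSpace α]
    [DiscreteTopology α] [NormedAddCommGroup E] [NormedSpace ℝ E] [CompleteSpace E]
    {w : α → ℝ} (hw : ∀ x, 0 < w x) {F : (α → E) → α → E} {q : ℝ} (hq : q < 1)
    (hF_bdd : ∀ u C, (∀ x, ‖u x‖ ≤ C * w x) → ∃ C', ∀ x, ‖F u x‖ ≤ C' * w x)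
    (hF_lip : ∀ u v C D M, (∀ x, ‖u x‖ ≤ C * w x) → (∀ x, ‖v x‖ ≤ D * w x) →
      (∀ x, ‖u x - v x‖ ≤ M * w x) → ∀ x, ‖F u x - F v x‖ ≤ q * M * w x) :
    ∃ u : α → E, (∃ C, ∀ x, ‖u x‖ ≤ C * w x) ∧ F u = u := by
  have norm_inv_smul_le {x : α} {y : E} {C : ℝ} (hy : ‖y‖ ≤ C * w x) : ‖(w x)⁻¹ • y‖ ≤ C := by
    rw [norm_smul, norm_inv, Real.norm_of_nonneg (hw x).le, inv_mul_le_iff₀ (hw x), mul_comm]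
    exact hy
  -- `f ↦ w • f` identifies bounded functions with functions that are `O(w)`.
  let W : (α →ᵇ E) → α → E := fun f x => w x • f x
  have norm_W (f : α →ᵇ E) (x : α) : ‖W f x‖ ≤ ‖f‖ * w x := by
    rw [norm_smul, Real.norm_of_nonneg (hw x).le, mul_comm]
    exact mul_le_mul_of_nonneg_right (f.norm_coe_le_norm x) (hw x).le
  have norm_W_sub (f g : α →ᵇ E) (x : α) : ‖W f x - W g x‖ ≤ dist f g * w x := by
    rw [← smul_sub, norm_smul, Real.norm_of_nonneg (hw x).le, mul_comm, ← dist_eq_norm]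
    exact mul_le_mul_of_nonneg_right (f.dist_coe_le_dist x) (hw x).le
  choose C' hC' using fun f => hF_bdd (W f) _ (norm_W f)
  let Φ : (α →ᵇ E) → α →ᵇ E := fun f =>
    ofNormedAddCommGroup (fun x => (w x)⁻¹ • F (W f) x) continuous_of_discreteTopology (C' f)
      fun x => norm_inv_smul_le (hC' f x)
  have hΦ : ContractingWith (max q 0).toNNReal Φ := by
    refine ⟨by simpa [Real.toNNReal_lt_one] using hq, LipschitzWith.of_dist_le_mul fun f g => ?_⟩
    rw [Real.coe_toNNReal _ (le_max_right q 0)]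
    refine (dist_le (by positivity)).2 fun x => ?_
    rw [dist_eq_norm]
    simp only [Φ, coe_ofNormedAddCommGroup, ← smul_sub]
    refine norm_inv_smul_le ((hF_lip _ _ _ _ _ (norm_W f) (norm_W g) (norm_W_sub f g) x).trans ?_)
    exact mul_le_mul_of_nonneg_right (mul_le_mul_of_nonneg_right (le_max_left q 0) dist_nonneg)
      (hw x).le
  have : Nonempty (α →ᵇ E) := ⟨0⟩
  set f := hΦ.fixedPoint Φ
  have hfix (x : α) : (w x)⁻¹ • F (W f) x = f x := congrArg (· x) hΦ.fixedPoint_isFixedPt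
  refine ⟨W f, ⟨_, norm_W f⟩, funext fun x => ?_⟩
  show F (W f) x = w x • f x
  rw [← hfix, smul_inv_smul₀ (hw x).ne']

/-- Pointwise form of `‖T U₁ - T U₂‖₁ ≤ q ‖U₁ - U₂‖₁` on `Ω`. -/
def OmegaLipschitz {X : Type*} [NormedAddCommGroup X] [NormedSpace ℝ X] (h μ : ℤ → ℝ)
    (a ε q : ℝ) (T : (ℤ → ℤ → X →L[ℝ] X) → ℤ → ℤ → X →L[ℝ] X) : Prop :=
  ∀ U₁ U₂, InOmega h μ a ε U₁ → InOmega h μ a ε U₂ → ∀ M : ℝ,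
    (∀ m n, n ≤ m → ‖U₁ m n - U₂ m n‖ ≤ M * dichotomyWeight h μ a ε m n) →
    ∀ m n, n ≤ m → ‖T U₁ m n - T U₂ m n‖ ≤ q * M * dichotomyWeight h μ a ε m n

def extendByZero {E : Type*} [Zero E] (u : {p : ℤ × ℤ // p.2 ≤ p.1} → E) (m n : ℤ) : E :=
  if hnm : n ≤ m then u ⟨(m, n), hnm⟩ else 0

namespace OmegaLipschitz

variable {X : Type*} [NormedAddCommGroup X] [NormedSpace ℝ X] {h μ : ℤ → ℝ} {a ε q : ℝ}
  {T : (ℤ → ℤ → X →L[ℝ] X) → ℤ → ℤ → X →L[ℝ] X}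

lemma inOmega_apply (hT : OmegaLipschitz h μ a ε q T) (hh : IsGrowthRate h)
    (hμ : IsGrowthRate μ) (h0 : InOmega h μ a ε (T 0)) {U : ℤ → ℤ → X →L[ℝ] X}
    (hU : InOmega h μ a ε U) : InOmega h μ a ε (T U) := by
  have hU0 : InOmega h μ a ε (0 : ℤ → ℤ → X →L[ℝ] X) :=
    (inOmega_iff hh hμ).2 ⟨0, fun m n _ => by simp⟩
  obtain ⟨C, hC⟩ := (inOmega_iff hh hμ).1 hU
  obtain ⟨D, hD⟩ := (inOmega_iff hh hμ).1 h0
  refine (inOmega_iff hh hμ).2 ⟨q * C + D, fun m n hnm => ?_⟩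
  have hdiff := hT U 0 hU hU0 C (fun m n hnm => by simpa using hC m n hnm) m n hnm
  rw [add_mul]
  exact (norm_le_norm_sub_add _ _).trans (add_le_add hdiff (hD m n hnm))

lemma norm1_sub_le (hT : OmegaLipschitz h μ a ε q T) (hh : IsGrowthRate h)
    (hμ : IsGrowthRate μ) {U₁ U₂ : ℤ → ℤ → X →L[ℝ] X} (hU₁ : InOmega h μ a ε U₁)
    (hU₂ : InOmega h μ a ε U₂) :
    norm1 h μ a ε (fun m n => T U₁ m n - T U₂ m n)
      ≤ q * norm1 h μ a ε (fun m n => U₁ m n - U₂ m n) :=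
  norm1_le hh hμ <| hT U₁ U₂ hU₁ hU₂ _ fun _ _ => norm_le_norm1_mul hh hμ (hU₁.sub hh hμ hU₂)

lemma exists_fixedPoint [CompleteSpace X] (hT : OmegaLipschitz h μ a ε q T)
    (hh : IsGrowthRate h) (hμ : IsGrowthRate μ) (hq : q < 1) (h0 : InOmega h μ a ε (T 0)) :
    ∃ U, InOmega h μ a ε U ∧ ∀ m n, n ≤ m → T U m n = U m n := by
  let w : {p : ℤ × ℤ // p.2 ≤ p.1} → ℝ := fun p => dichotomyWeight h μ a ε p.1.1 p.1.2
  have inOmega_extend {u : {p : ℤ × ℤ // p.2 ≤ p.1} → X →L[ℝ] X} {C : ℝ}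
      (hu : ∀ p, ‖u p‖ ≤ C * w p) :
      InOmega h μ a ε (extendByZero u) :=
    (inOmega_iff hh hμ).2 ⟨C, fun m n hnm => by simpa [extendByZero, hnm] using hu ⟨(m, n), hnm⟩⟩
  obtain ⟨u, ⟨C, hu⟩, hfix⟩ := exists_fixedPoint_of_weighted_contraction
    (F := fun u p => T (extendByZero u) p.1.1 p.1.2) (fun p => dichotomyWeight_pos hh hμ _ _) hq
    (fun u C hu => (inOmega_iff hh hμ).1 (hT.inOmega_apply hh hμ h0 (inOmega_extend hu)) |>.imp
      fun C' hC' p => hC' _ _ p.2)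
    (fun u v C D M hu hv huv p => hT _ _ (inOmega_extend hu) (inOmega_extend hv) M
      (fun m n hnm => by simpa [extendByZero, hnm] using huv ⟨(m, n), hnm⟩) _ _ p.2)
  refine ⟨extendByZero u, inOmega_extend hu, fun m n hnm => ?_⟩
  simpa [extendByZero, hnm] using congrFun hfix ⟨(m, n), hnm⟩

lemma eq_of_fixedPoint (hT : OmegaLipschitz h μ a ε q T) (hh : IsGrowthRate h)
    (hμ : IsGrowthRate μ) (hq : q < 1) {U V : ℤ → ℤ → X →L[ℝ] X} (hU : InOmega h μ a ε U)
    (hV : InOmega h μ a ε V) (hUfix : ∀ m n, n ≤ m → T U m n = U m n)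
    (hVfix : ∀ m n, n ≤ m → T V m n = V m n) : ∀ m n, n ≤ m → V m n = U m n := by
  set d := norm1 h μ a ε (fun m n => V m n - U m n)
  have hd : d ≤ q * d := by
    have hcontr := hT.norm1_sub_le hh hμ hV hU
    rwa [norm1, norm1, weightSet_congr fun m n hnm => by rw [hUfix m n hnm, hVfix m n hnm]]
      at hcontr
  have hd_nonneg : 0 ≤ d := norm1_nonneg hh hμ _
  have hd0 : d ≤ 0 := by nlinarith
  intro m n hnm
  have hVU := norm_le_norm1_mul hh hμ (hV.sub hh hμ hU) hnm
  rw [← sub_eq_zero, ← norm_le_zero_iff]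
  exact hVU.trans (mul_nonpos_of_nonpos_of_nonneg hd0 (dichotomyWeight_pos hh hμ m n).le)

end OmegaLipschitz

lemma sum_Ico_le_tsum {f : ℤ → ℝ} (hf : ∀ x, 0 ≤ f x) {m : ℤ}
    (hs : Summable fun j : ℕ => f (m - j)) (n : ℤ) :
    ∑ τ ∈ Ico n m, f (τ + 1) ≤ ∑' j : ℕ, f (m - j) := by
  have hreindex : ∑ τ ∈ Ico n m, f (τ + 1) = ∑ j ∈ range (m - n).toNat, f (m - j) :=
    sum_nbij' (fun τ => (m - 1 - τ).toNat) (fun j => m - 1 - j)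
      (fun τ hτ => by simp only [mem_Ico, mem_range] at *; omega)
      (fun j hj => by simp only [mem_Ico, mem_range] at *; omega)
      (fun τ hτ => by simp only [mem_Ico] at hτ; omega)
      (fun j _ => by omega)
      (fun τ hτ => by simp only [mem_Ico] at hτ; congr 1; omega)
  rw [hreindex]
  exact hs.sum_le_tsum _ fun j _ => hf _

lemma norm_comp_comp_comp_le_of_le {E : Type*} [NormedAddCommGroup E] [NormedSpace ℝ E]
    {f g b v : E →L[ℝ] E} {F G V : ℝ} (hf : ‖f.comp g‖ ≤ F) (hb : ‖b‖ ≤ G) (hv : ‖v‖ ≤ V) :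
    ‖f.comp (g.comp (b.comp v))‖ ≤ F * (G * V) := by
  rw [← ContinuousLinearMap.comp_assoc]
  calc _ ≤ ‖f.comp g‖ * (‖b‖ * ‖v‖) :=
        (ContinuousLinearMap.opNorm_comp_le _ _).trans
          (mul_le_mul_of_nonneg_left (ContinuousLinearMap.opNorm_comp_le _ _) (norm_nonneg _))
    _ ≤ F * (G * V) :=
        mul_le_mul hf (mul_le_mul hb hv (norm_nonneg _) ((norm_nonneg _).trans hb))
          (by positivity) ((norm_nonneg _).trans hf)

section Perturbation

variable {X : Type*} [NormedAddCommGroup X] [NormedSpace ℝ X] {𝓐 : ℤ → ℤ → X →L[ℝ] X}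
  {P B : ℤ → X →L[ℝ] X} {h k μ ν : ℤ → ℝ} {K a b c ε ω : ℝ}

def stableTerm (𝓐 : ℤ → ℤ → X →L[ℝ] X) (P B : ℤ → X →L[ℝ] X) (U : ℤ → ℤ → X →L[ℝ] X)
    (m n τ : ℤ) : X →L[ℝ] X :=
  (𝓐 m (τ + 1)).comp ((P (τ + 1)).comp ((B τ).comp (U τ n)))

def unstableTerm (𝓐 : ℤ → ℤ → X →L[ℝ] X) (P B : ℤ → X →L[ℝ] X) (U : ℤ → ℤ → X →L[ℝ] X)
    (m n τ : ℤ) : X →L[ℝ] X :=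
  (𝓐 m (τ + 1)).comp ((ContinuousLinearMap.id ℝ X - P (τ + 1)).comp ((B τ).comp (U τ n)))

lemma norm_stableTerm_le (hh : IsGrowthRate h) (hμ : IsGrowthRate μ)
    (hbound1 : ∀ m n, n ≤ m → ‖(𝓐 m n).comp (P n)‖ ≤ K * (h m / h n) ^ a * μ |n| ^ ε)
    (hB : ∀ τ, ‖B τ‖ ≤ c * ((h (τ + 1) / h τ) ^ a * μ |τ + 1| ^ (-(ω + ε))))
    {U : ℤ → ℤ → X →L[ℝ] X} {M : ℝ} {m n τ : ℤ} (hτm : τ < m)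
    (hU : ‖U τ n‖ ≤ M * dichotomyWeight h μ a ε τ n) :
    ‖stableTerm 𝓐 P B U m n τ‖ ≤ K * c * M * μ |τ + 1| ^ (-ω) * dichotomyWeight h μ a ε m n := by
  have hcocycle : (h m / h (τ + 1)) ^ a * ((h (τ + 1) / h τ) ^ a * (h τ / h n) ^ a)
      = (h m / h n) ^ a := by
    rw [div_rpow_mul_div_rpow (hh.pos _).le (hh.pos _) (hh.pos _),
      div_rpow_mul_div_rpow (hh.pos _).le (hh.pos _) (hh.pos _)]
  calc _ ≤ (K * (h m / h (τ + 1)) ^ a * μ |τ + 1| ^ ε)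
        * ((c * ((h (τ + 1) / h τ) ^ a * μ |τ + 1| ^ (-(ω + ε))))
          * (M * ((h τ / h n) ^ a * μ |n| ^ ε))) :=
        norm_comp_comp_comp_le_of_le (hbound1 m (τ + 1) (by omega)) (hB τ) hU
    _ = K * c * M * (μ |τ + 1| ^ ε * μ |τ + 1| ^ (-(ω + ε)))
        * ((h m / h (τ + 1)) ^ a * ((h (τ + 1) / h τ) ^ a * (h τ / h n) ^ a) * μ |n| ^ ε) := by
        ring
    _ = _ := by rw [hcocycle, rpow_mul_rpow_neg_add (hμ.pos _), dichotomyWeight, mul_assoc]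

lemma norm_unstableTerm_le (hh : IsGrowthRate h) (hk : IsGrowthRate k) (hμ : IsGrowthRate μ)
    (hν : IsGrowthRate ν) (hK : 0 ≤ K) (ha : a ≤ 0) (hb : 0 ≤ b)
    (hbound2 : ∀ m n, m ≤ n →
      ‖(𝓐 m n).comp (ContinuousLinearMap.id ℝ X - P n)‖ ≤ K * (k n / k m) ^ (-b) * ν |n| ^ ε)
    (hB : ∀ τ, ‖B τ‖ ≤ c * ν |τ + 1| ^ (-(ω + ε)))
    {U : ℤ → ℤ → X →L[ℝ] X} {M : ℝ} {m n τ : ℤ} (hmτ : m ≤ τ)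
    (hU : ‖U τ n‖ ≤ M * dichotomyWeight h μ a ε τ n) :
    ‖unstableTerm 𝓐 P B U m n τ‖
      ≤ K * c * M * ν |τ + 1| ^ (-ω) * dichotomyWeight h μ a ε m n := by
  have hA : ‖(𝓐 m (τ + 1)).comp (ContinuousLinearMap.id ℝ X - P (τ + 1))‖ ≤ K * ν |τ + 1| ^ ε := by
    have hk_le : (k (τ + 1) / k m) ^ (-b) ≤ 1 :=
      Real.rpow_le_one_of_one_le_of_nonpos
        ((one_le_div (hk.pos m)).2 (hk.1.monotone (by omega))) (by linarith)
    refine (hbound2 m (τ + 1) (by omega)).trans ?_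
    have := Real.rpow_nonneg (hν.pos |τ + 1|).le ε
    calc _ ≤ K * 1 * ν |τ + 1| ^ ε := by gcongr
      _ = _ := by ring
  have hU' : ‖U τ n‖ ≤ M * dichotomyWeight h μ a ε m n :=
    hU.trans (mul_le_mul_of_nonneg_left (dichotomyWeight_le_of_le hh hμ ha hmτ n)
      (nonneg_of_norm_le_mul_dichotomyWeight hh hμ hU))
  calc _ ≤ (K * ν |τ + 1| ^ ε)
        * ((c * ν |τ + 1| ^ (-(ω + ε))) * (M * dichotomyWeight h μ a ε m n)) :=
        norm_comp_comp_comp_le_of_le hA (hB τ) hU'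
    _ = K * c * M * (ν |τ + 1| ^ ε * ν |τ + 1| ^ (-(ω + ε))) * dichotomyWeight h μ a ε m n := by
        ring
    _ = _ := by rw [rpow_mul_rpow_neg_add (hν.pos _)]


lemma norm_sum_stableTerm_le (hh : IsGrowthRate h) (hμ : IsGrowthRate μ) (hν : IsGrowthRate ν)
    (hK : 0 ≤ K) (hc : 0 ≤ c) (hε : 0 ≤ ε)
    (hbound1 : ∀ m n, n ≤ m → ‖(𝓐 m n).comp (P n)‖ ≤ K * (h m / h n) ^ a * μ |n| ^ ε)
    (hB : ∀ τ, ‖B τ‖ ≤ c * ((h (τ + 1) / h τ) ^ a * μ |τ + 1| ^ (-(ω + ε))))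
    {N₁ : ℝ} (hN₁ : ∀ m : ℤ, Summable (fun τ : ℕ => μ |m - τ| ^ (-ω)) ∧
      (∑' τ : ℕ, μ |m - τ| ^ (-ω)) * ν |m| ^ ε ≤ N₁)
    {U : ℤ → ℤ → X →L[ℝ] X} {M : ℝ}
    {m n : ℤ} (hU : ∀ τ, n ≤ τ → ‖U τ n‖ ≤ M * dichotomyWeight h μ a ε τ n) :
    ‖∑ τ ∈ Ico n m, stableTerm 𝓐 P B U m n τ‖ ≤ K * c * N₁ * M * dichotomyWeight h μ a ε m n := by
  have hM := nonneg_of_norm_le_mul_dichotomyWeight hh hμ (hU n le_rfl)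
  have hμ_nonneg (x : ℤ) : 0 ≤ μ |x| ^ (-ω) := Real.rpow_nonneg (hμ.pos _).le _
  have hsum : ∑ τ ∈ Ico n m, μ |τ + 1| ^ (-ω) ≤ N₁ :=
    calc _ ≤ ∑' j : ℕ, μ |m - j| ^ (-ω) := sum_Ico_le_tsum hμ_nonneg (hN₁ m).1 n
      _ ≤ (∑' j : ℕ, μ |m - j| ^ (-ω)) * ν |m| ^ ε :=
        le_mul_of_one_le_right (tsum_nonneg fun _ => hμ_nonneg _)
          (Real.one_le_rpow (hν.one_le_apply_abs m) hε)
      _ ≤ N₁ := (hN₁ m).2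
  calc _ ≤ ∑ τ ∈ Ico n m, K * c * M * μ |τ + 1| ^ (-ω) * dichotomyWeight h μ a ε m n :=
        (norm_sum_le _ _).trans <| sum_le_sum fun τ hτ =>
          norm_stableTerm_le hh hμ hbound1 hB (mem_Ico.1 hτ).2 (hU τ (mem_Ico.1 hτ).1)
    _ = K * c * M * (∑ τ ∈ Ico n m, μ |τ + 1| ^ (-ω)) * dichotomyWeight h μ a ε m n := by
        rw [← sum_mul, ← mul_sum]
    _ ≤ K * c * M * N₁ * dichotomyWeight h μ a ε m n := by
        gcongr
        exact (dichotomyWeight_pos hh hμ m n).le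
    _ = _ := by ring

lemma norm_tsum_unstableTerm_le (hh : IsGrowthRate h) (hk : IsGrowthRate k)
    (hμ : IsGrowthRate μ) (hν : IsGrowthRate ν) (hK : 0 ≤ K) (hc : 0 ≤ c) (ha : a ≤ 0)
    (hb : 0 ≤ b) (hε : 0 ≤ ε)
    (hbound2 : ∀ m n, m ≤ n →
      ‖(𝓐 m n).comp (ContinuousLinearMap.id ℝ X - P n)‖ ≤ K * (k n / k m) ^ (-b) * ν |n| ^ ε)
    (hB : ∀ τ, ‖B τ‖ ≤ c * ν |τ + 1| ^ (-(ω + ε)))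
    {N₂ : ℝ} (hN₂ : ∀ m : ℤ, Summable (fun τ : ℕ => ν |m + τ + 1| ^ (-ω)) ∧
      μ |m| ^ ε * (∑' τ : ℕ, ν |m + τ + 1| ^ (-ω)) ≤ N₂)
    {U : ℤ → ℤ → X →L[ℝ] X} {M : ℝ} {m n : ℤ} (hnm : n ≤ m)
    (hU : ∀ τ, n ≤ τ → ‖U τ n‖ ≤ M * dichotomyWeight h μ a ε τ n) :
    ‖∑' τ : ℕ, unstableTerm 𝓐 P B U m n (m + τ)‖
      ≤ K * c * N₂ * M * dichotomyWeight h μ a ε m n := by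
  have hM := nonneg_of_norm_le_mul_dichotomyWeight hh hμ (hU n le_rfl)
  have hsum : ∑' τ : ℕ, ν |m + τ + 1| ^ (-ω) ≤ N₂ :=
    (le_mul_of_one_le_left (tsum_nonneg fun _ => Real.rpow_nonneg (hν.pos _).le _)
      (Real.one_le_rpow (hμ.one_le_apply_abs m) hε)).trans (hN₂ m).2
  calc _ ≤ K * c * M * (∑' τ : ℕ, ν |m + τ + 1| ^ (-ω)) * dichotomyWeight h μ a ε m n :=
        tsum_of_norm_bounded (((hN₂ m).1.hasSum.mul_left (K * c * M)).mul_right _) fun τ =>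
          norm_unstableTerm_le hh hk hμ hν hK ha hb hbound2 hB (by omega) (hU _ (by omega))
    _ ≤ K * c * M * N₂ * dichotomyWeight h μ a ε m n := by
        gcongr
        exact (dichotomyWeight_pos hh hμ m n).le
    _ = _ := by ring

lemma Jop_sub_Jop [CompleteSpace X] {U₁ U₂ : ℤ → ℤ → X →L[ℝ] X} {m n : ℤ}
    (h₁ : Summable fun τ : ℕ => unstableTerm 𝓐 P B U₁ m n (m + τ))
    (h₂ : Summable fun τ : ℕ => unstableTerm 𝓐 P B U₂ m n (m + τ)) :
    Jop 𝓐 P B U₁ m n - Jop 𝓐 P B U₂ m n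
      = ∑ τ ∈ Ico n m, stableTerm 𝓐 P B (fun m n => U₁ m n - U₂ m n) m n τ
        - ∑' τ : ℕ, unstableTerm 𝓐 P B (fun m n => U₁ m n - U₂ m n) m n (m + τ) := by
  have hstable (τ : ℤ) : stableTerm 𝓐 P B (fun m n => U₁ m n - U₂ m n) m n τ
      = stableTerm 𝓐 P B U₁ m n τ - stableTerm 𝓐 P B U₂ m n τ := by
    simp only [stableTerm, ContinuousLinearMap.comp_sub]
  have hunstable (τ : ℤ) : unstableTerm 𝓐 P B (fun m n => U₁ m n - U₂ m n) m n τ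
      = unstableTerm 𝓐 P B U₁ m n τ - unstableTerm 𝓐 P B U₂ m n τ := by
    simp only [unstableTerm, ContinuousLinearMap.comp_sub]
  simp only [hstable, hunstable, sum_sub_distrib, h₁.tsum_sub h₂]
  simp only [Jop, stableTerm, unstableTerm]
  abel

lemma inOmega_Jop_zero [CompleteSpace X] (hh : IsGrowthRate h) (hμ : IsGrowthRate μ)
    (hbound1 : ∀ m n, n ≤ m → ‖(𝓐 m n).comp (P n)‖ ≤ K * (h m / h n) ^ a * μ |n| ^ ε) :
    InOmega h μ a ε (Jop 𝓐 P B 0) := by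
  refine (inOmega_iff hh hμ).2 ⟨K, fun m n hnm => ?_⟩
  simpa [Jop, dichotomyWeight, mul_assoc] using hbound1 m n hnm

theorem omegaLipschitz_Jop [CompleteSpace X] (hh : IsGrowthRate h) (hk : IsGrowthRate k)
    (hμ : IsGrowthRate μ) (hν : IsGrowthRate ν) (hK : 0 ≤ K) (hc : 0 ≤ c) (ha : a ≤ 0)
    (hb : 0 ≤ b) (hε : 0 ≤ ε)
    (hbound1 : ∀ m n, n ≤ m → ‖(𝓐 m n).comp (P n)‖ ≤ K * (h m / h n) ^ a * μ |n| ^ ε)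
    (hbound2 : ∀ m n, m ≤ n →
      ‖(𝓐 m n).comp (ContinuousLinearMap.id ℝ X - P n)‖ ≤ K * (k n / k m) ^ (-b) * ν |n| ^ ε)
    (hB_stable : ∀ τ, ‖B τ‖ ≤ c * ((h (τ + 1) / h τ) ^ a * μ |τ + 1| ^ (-(ω + ε))))
    (hB_unstable : ∀ τ, ‖B τ‖ ≤ c * ν |τ + 1| ^ (-(ω + ε)))
    {N₁ N₂ : ℝ} (hN₁ : ∀ m : ℤ, Summable (fun τ : ℕ => μ |m - τ| ^ (-ω)) ∧
      (∑' τ : ℕ, μ |m - τ| ^ (-ω)) * ν |m| ^ ε ≤ N₁)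
    (hN₂ : ∀ m : ℤ, Summable (fun τ : ℕ => ν |m + τ + 1| ^ (-ω)) ∧
      μ |m| ^ ε * (∑' τ : ℕ, ν |m + τ + 1| ^ (-ω)) ≤ N₂) :
    OmegaLipschitz h μ a ε (K * c * (N₁ + N₂)) (Jop 𝓐 P B) := by
  intro U₁ U₂ hU₁ hU₂ M hM m n hnm
  have hsummable {U : ℤ → ℤ → X →L[ℝ] X} (hU : InOmega h μ a ε U) :
      Summable fun τ : ℕ => unstableTerm 𝓐 P B U m n (m + τ) := by
    obtain ⟨C, hC⟩ := (inOmega_iff hh hμ).1 hU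
    exact ((hN₂ m).1.mul_left (K * c * C)).mul_right _ |>.of_norm_bounded fun τ =>
      norm_unstableTerm_le hh hk hμ hν hK ha hb hbound2 hB_unstable (by omega) (hC _ _ (by omega))
  rw [Jop_sub_Jop (hsummable hU₁) (hsummable hU₂)]
  have hstable := norm_sum_stableTerm_le (U := fun m n => U₁ m n - U₂ m n) (m := m)
    hh hμ hν hK hc hε hbound1 hB_stable hN₁ fun τ => hM τ n
  have hunstable := norm_tsum_unstableTerm_le (U := fun m n => U₁ m n - U₂ m n)
    hh hk hμ hν hK hc ha hb hε hbound2 hB_unstable hN₂ hnm fun τ => hM τ n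
  calc _ ≤ _ := norm_sub_le _ _
    _ ≤ _ := add_le_add hstable hunstable
    _ = _ := by ring

end Perturbation

theorem stmt11_general {X : Type*} [NormedAddCommGroup X] [NormedSpace ℝ X] [CompleteSpace X]
    (𝓐 : ℤ → ℤ → X →L[ℝ] X)
    (P : ℤ → X →L[ℝ] X)
    (h k μ ν : ℤ → ℝ) (hh : IsGrowthRate h) (hk : IsGrowthRate k)
    (hμ : IsGrowthRate μ) (hν : IsGrowthRate ν)
    (K a b ε : ℝ) (hK : 0 < K) (ha : a < 0) (hb : 0 ≤ b) (hε : 0 ≤ ε)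
    (hbound1 : ∀ m n, n ≤ m → ‖(𝓐 m n).comp (P n)‖ ≤ K * (h m / h n) ^ a * μ |n| ^ ε)
    (hbound2 : ∀ m n, m ≤ n →
      ‖(𝓐 m n).comp (ContinuousLinearMap.id ℝ X - P n)‖ ≤ K * (k n / k m) ^ (-b) * ν |n| ^ ε)
    (B : ℤ → X →L[ℝ] X) (c ω : ℝ) (hc : 0 < c)
    (hB : ∀ m : ℤ, ‖B m‖ ≤ c * min ((h (m + 1) / h m) ^ a * μ |m + 1| ^ (-(ω + ε)))
      (ν |m + 1| ^ (-(ω + ε))))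
    (N₁ N₂ : ℝ)
    (hN₁ : ∀ m : ℤ, Summable (fun τ : ℕ => μ |m - τ| ^ (-ω)) ∧
      (∑' τ : ℕ, μ |m - τ| ^ (-ω)) * ν |m| ^ ε ≤ N₁)
    (hN₂ : ∀ m : ℤ, Summable (fun τ : ℕ => ν |m + τ + 1| ^ (-ω)) ∧
      μ |m| ^ ε * (∑' τ : ℕ, ν |m + τ + 1| ^ (-ω)) ≤ N₂) :
    (∀ U, InOmega h μ a ε U → InOmega h μ a ε (Jop 𝓐 P B U)) ∧
      (∀ U₁ U₂, InOmega h μ a ε U₁ → InOmega h μ a ε U₂ →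
        norm1 h μ a ε (fun m n => Jop 𝓐 P B U₁ m n - Jop 𝓐 P B U₂ m n)
          ≤ K * c * (N₁ + N₂) * norm1 h μ a ε (fun m n => U₁ m n - U₂ m n)) ∧
      (K * c * (N₁ + N₂) < 1 →
        ∃ U, InOmega h μ a ε U ∧ (∀ m n, n ≤ m → Jop 𝓐 P B U m n = U m n) ∧
          ∀ V, InOmega h μ a ε V → (∀ m n, n ≤ m → Jop 𝓐 P B V m n = V m n) →
            ∀ m n, n ≤ m → V m n = U m n) := by
  have hT : OmegaLipschitz h μ a ε (K * c * (N₁ + N₂)) (Jop 𝓐 P B) :=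
    omegaLipschitz_Jop hh hk hμ hν hK.le hc.le ha.le hb hε hbound1 hbound2
      (fun τ => (hB τ).trans (mul_le_mul_of_nonneg_left (min_le_left _ _) hc.le))
      (fun τ => (hB τ).trans (mul_le_mul_of_nonneg_left (min_le_right _ _) hc.le)) hN₁ hN₂
  have h0 : InOmega h μ a ε (Jop 𝓐 P B 0) := inOmega_Jop_zero hh hμ hbound1
  refine ⟨fun U => hT.inOmega_apply hh hμ h0, fun U₁ U₂ => hT.norm1_sub_le hh hμ, fun hq => ?_⟩
  obtain ⟨U, hU, hUfix⟩ := hT.exists_fixedPoint hh hμ hq h0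
  exact ⟨U, hU, hUfix, fun V hV hVfix => hT.eq_of_fixedPoint hh hμ hq hU hV hUfix hVfix⟩

theorem stmt11 {X : Type*} [NormedAddCommGroup X] [NormedSpace ℝ X] [CompleteSpace X]
    (𝓐 : ℤ → ℤ → X →L[ℝ] X)
    (hcoc : ∀ m n k : ℤ, (𝓐 m n).comp (𝓐 n k) = 𝓐 m k)
    (hid : ∀ n : ℤ, 𝓐 n n = ContinuousLinearMap.id ℝ X)
    (P : ℤ → X →L[ℝ] X)
    (hproj : ∀ n, (P n).comp (P n) = P n)
    (hcomm : ∀ m n, (P m).comp (𝓐 m n) = (𝓐 m n).comp (P n))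
    (h k μ ν : ℤ → ℝ) (hh : IsGrowthRate h) (hk : IsGrowthRate k)
    (hμ : IsGrowthRate μ) (hν : IsGrowthRate ν)
    (K a b ε : ℝ) (hK : 0 < K) (ha : a < 0) (hb : 0 ≤ b) (hε : 0 ≤ ε)
    (hbound1 : ∀ m n, n ≤ m → ‖(𝓐 m n).comp (P n)‖ ≤ K * (h m / h n) ^ a * μ |n| ^ ε)
    (hbound2 : ∀ m n, m ≤ n →
      ‖(𝓐 m n).comp (ContinuousLinearMap.id ℝ X - P n)‖ ≤ K * (k n / k m) ^ (-b) * ν |n| ^ ε)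
    (B : ℤ → X →L[ℝ] X) (c ω : ℝ) (hc : 0 < c) (hω : 1 < ω)
    (hB : ∀ m : ℤ, ‖B m‖ ≤ c * min ((h (m + 1) / h m) ^ a * μ |m + 1| ^ (-(ω + ε)))
      (ν |m + 1| ^ (-(ω + ε))))
    (N₁ N₂ : ℝ)
    (hN₁ : ∀ m : ℤ, Summable (fun τ : ℕ => μ |m - τ| ^ (-ω)) ∧
      (∑' τ : ℕ, μ |m - τ| ^ (-ω)) * ν |m| ^ ε ≤ N₁)
    (hN₂ : ∀ m : ℤ, Summable (fun τ : ℕ => ν |m + τ + 1| ^ (-ω)) ∧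
      μ |m| ^ ε * (∑' τ : ℕ, ν |m + τ + 1| ^ (-ω)) ≤ N₂) :
    (∀ U, InOmega h μ a ε U → InOmega h μ a ε (Jop 𝓐 P B U)) ∧
      (∀ U₁ U₂, InOmega h μ a ε U₁ → InOmega h μ a ε U₂ →
        norm1 h μ a ε (fun m n => Jop 𝓐 P B U₁ m n - Jop 𝓐 P B U₂ m n)
          ≤ K * c * (N₁ + N₂) * norm1 h μ a ε (fun m n => U₁ m n - U₂ m n)) ∧
      (K * c * (N₁ + N₂) < 1 →
        ∃ U, InOmega h μ a ε U ∧ (∀ m n, n ≤ m → Jop 𝓐 P B U m n = U m n) ∧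
          ∀ V, InOmega h μ a ε V → (∀ m n, n ≤ m → Jop 𝓐 P B V m n = V m n) →
            ∀ m n, n ≤ m → V m n = U m n) :=
  stmt11_general 𝓐 P h k μ ν hh hk hμ hν K a b ε hK ha hb hε hbound1 hbound2 B c ω hc hB N₁ N₂ hN₁
    hN₂
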